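/- Let ξ be a C² modulus with ξ′>0 and A(t)=t²ξ²(t) satisfying A″>0; let r and Γ^t be as in the standard construction. For any t>0, the curve Γ^t(τ) = ((τ/t)r(τ), (τ/t)(r²(τ)+ξ²(τ))), τ≥0, lies on or below the parabola x₂ = x₁² + ξ²(t), touching it exactly at the point where x₁ = r(t) (i.e., at τ = t), which is the unique common point. -/

import Mathlib

open Set

/-!
With `A(s) = s²ξ(s)²` one has `A'(τ) = τ(r(τ)² + ξ(τ)²)` and `τ²r(τ)² = τA'(τ) - A(τ)`, so
multiplying by `t²` turns the gap between the parabola and `Γ^t(τ)` into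
`A(t) - A(τ) - A'(τ)(t - τ)`. This is positive for `τ ≠ t` by strict convexity of `A`
(and equals `ξ(t)² > 0` at `τ = 0`).
-/

theorem strictConvexOn_of_hasDerivAt_deriv_pos {D : Set ℝ} (hD : Convex ℝ D) {f f'' : ℝ → ℝ}
    (hf : ContinuousOn f D) (hf'' : ∀ x ∈ D, HasDerivAt (deriv f) (f'' x) x)
    (hpos : ∀ x ∈ D, 0 < f'' x) : StrictConvexOn ℝ D f :=
  strictConvexOn_of_deriv2_pos' hD hf fun x hx => by
    rw [Function.iterate_succ_apply, Function.iterate_one, (hf'' x hx).deriv]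
    exact hpos x hx

theorem StrictConvexOn.add_mul_sub_lt_of_hasDerivAt {S : Set ℝ} {f : ℝ → ℝ} {x y f' : ℝ}
    (hfc : StrictConvexOn ℝ S f) (hx : x ∈ S) (hy : y ∈ S) (hxy : x ≠ y)
    (hf' : HasDerivAt f f' x) : f x + f' * (y - x) < f y := by
  rcases hxy.lt_or_gt with h | h
  · have := hfc.lt_slope_of_hasDerivAt hx hy h hf'
    rw [slope_def_field, lt_div_iff₀ (sub_pos.2 h)] at this
    linarith
  · have := hfc.slope_lt_of_hasDerivAt hy hx h hf'
    rw [slope_def_field, div_lt_iff₀ (sub_pos.2 h)] at this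
    linarith

theorem hasDerivAt_sq_mul_sq {ξ : ℝ → ℝ} {d s : ℝ} (h : HasDerivAt ξ d s) :
    HasDerivAt (fun s => s ^ 2 * ξ s ^ 2) (2 * s * ξ s ^ 2 + 2 * s ^ 2 * ξ s * d) s := by
  refine ((hasDerivAt_pow 2 s).fun_mul (h.fun_pow 2)).congr_deriv ?_
  ring

theorem parabola_sub_curve_eq {t τ x y d ρ : ℝ} (ht : t ≠ 0)
    (hρ : ρ ^ 2 = x ^ 2 + 2 * τ * x * d) :
    ((τ / t) * ρ) ^ 2 + y ^ 2 - (τ / t) * (ρ ^ 2 + x ^ 2) =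
      (t ^ 2 * y ^ 2 - (τ ^ 2 * x ^ 2 + (2 * τ * x ^ 2 + 2 * τ ^ 2 * x * d) * (t - τ)))
        / t ^ 2 := by
  field_simp
  linear_combination (τ ^ 2 - τ * t) * hρ

theorem curve_lt_parabola {ξ ξ' A'' r : ℝ → ℝ}
    (hpos : ∀ t > 0, 0 < ξ t)
    (hderiv : ∀ t > 0, HasDerivAt ξ (ξ' t) t)
    (hξ'pos : ∀ t > 0, 0 < ξ' t)
    (hA'' : ∀ t > 0, HasDerivAt (deriv (fun t => t ^ 2 * ξ t ^ 2)) (A'' t) t)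
    (hA''pos : ∀ t > 0, 0 < A'' t)
    (hr : ∀ s, r s = Real.sqrt (ξ s ^ 2 + 2 * s * ξ s * ξ' s))
    {t τ : ℝ} (ht : 0 < t) (hτ : 0 ≤ τ) (hτt : τ ≠ t) :
    (τ / t) * (r τ ^ 2 + ξ τ ^ 2) < ((τ / t) * r τ) ^ 2 + ξ t ^ 2 := by
  rcases hτ.eq_or_lt with rfl | hτ
  · simpa using pow_pos (hpos t ht) 2
  have hconvex : StrictConvexOn ℝ (Ioi 0) (fun t => t ^ 2 * ξ t ^ 2) :=
    strictConvexOn_of_hasDerivAt_deriv_pos (convex_Ioi 0)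
      (fun s hs => (hasDerivAt_sq_mul_sq (hderiv s hs)).continuousAt.continuousWithinAt)
      hA'' hA''pos
  have htangent :=
    hconvex.add_mul_sub_lt_of_hasDerivAt hτ ht hτt (hasDerivAt_sq_mul_sq (hderiv τ hτ))
  have hr2 : r τ ^ 2 = ξ τ ^ 2 + 2 * τ * ξ τ * ξ' τ := by
    rw [hr, Real.sq_sqrt]
    have := hpos τ hτ
    have := hξ'pos τ hτ
    positivity
  rw [← sub_pos, parabola_sub_curve_eq ht.ne' hr2]
  exact div_pos (by linarith) (by positivity)

theorem statement8_general (ξ ξ' A'' : ℝ → ℝ)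
    (hpos : ∀ t > 0, 0 < ξ t)
    (hderiv : ∀ t > 0, HasDerivAt ξ (ξ' t) t)
    (hξ'pos : ∀ t > 0, 0 < ξ' t)
    (hA'' : ∀ t > 0, HasDerivAt (deriv (fun t => t ^ 2 * ξ t ^ 2)) (A'' t) t)
    (hA''pos : ∀ t > 0, 0 < A'' t)
    (r : ℝ → ℝ) (hr : ∀ s, r s = Real.sqrt (ξ s ^ 2 + 2 * s * ξ s * ξ' s))
    (t : ℝ) (ht : 0 < t) :
    (∀ τ ≥ (0 : ℝ),
      (τ / t) * (r τ ^ 2 + ξ τ ^ 2) ≤ ((τ / t) * r τ) ^ 2 + ξ t ^ 2) ∧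
    (∀ τ ≥ (0 : ℝ),
      ((τ / t) * (r τ ^ 2 + ξ τ ^ 2) = ((τ / t) * r τ) ^ 2 + ξ t ^ 2 ↔ τ = t)) ∧
    (t / t) * r t = r t := by
  have hlt τ (hτ : 0 ≤ τ) (hτt : τ ≠ t) :=
    curve_lt_parabola hpos hderiv hξ'pos hA'' hA''pos hr ht hτ hτt
  have heq : (t / t) * (r t ^ 2 + ξ t ^ 2) = ((t / t) * r t) ^ 2 + ξ t ^ 2 := by
    rw [div_self ht.ne']
    ring
  refine ⟨fun τ hτ => ?_, fun τ hτ => ⟨fun h => ?_, ?_⟩, by rw [div_self ht.ne', one_mul]⟩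
  · rcases eq_or_ne τ t with rfl | hτt
    · exact heq.le
    · exact (hlt τ hτ hτt).le
  · by_contra hτt
    exact (hlt τ hτ hτt).ne h
  · rintro rfl
    exact heq

/-- Under the smooth setup, for any `t > 0` the curve
`Γ^t(τ) = ((τ/t)r(τ), (τ/t)(r²(τ)+ξ²(τ)))`, `τ ≥ 0`, lies on or below the parabola
`x₂ = x₁² + ξ²(t)`, touching it exactly at `τ = t` (where `x₁ = r(t)`), its unique common
point with the parabola. -/
theorem statement8 (ξ ξ' A'' : ℝ → ℝ)
    (hsmooth : ContDiffOn ℝ 2 ξ (Set.Ioi 0))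
    (hpos : ∀ t > 0, 0 < ξ t)
    (hξ0 : Filter.Tendsto ξ (nhdsWithin 0 (Set.Ioi 0)) (nhds 0))
    (hderiv : ∀ t > 0, HasDerivAt ξ (ξ' t) t)
    (hξ'pos : ∀ t > 0, 0 < ξ' t)
    (hA'' : ∀ t > 0, HasDerivAt (deriv (fun t => t ^ 2 * ξ t ^ 2)) (A'' t) t)
    (hA''pos : ∀ t > 0, 0 < A'' t)
    (r : ℝ → ℝ) (hr : ∀ s, r s = Real.sqrt (ξ s ^ 2 + 2 * s * ξ s * ξ' s))
    (t : ℝ) (ht : 0 < t) :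
    (∀ τ ≥ (0 : ℝ),
      (τ / t) * (r τ ^ 2 + ξ τ ^ 2) ≤ ((τ / t) * r τ) ^ 2 + ξ t ^ 2) ∧
    (∀ τ ≥ (0 : ℝ),
      ((τ / t) * (r τ ^ 2 + ξ τ ^ 2) = ((τ / t) * r τ) ^ 2 + ξ t ^ 2 ↔ τ = t)) ∧
    (t / t) * r t = r t :=
  statement8_general ξ ξ' A'' hpos hderiv hξ'pos hA'' hA''pos r hr t ht
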